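/- Let α ∈ (−1/2, 1/2) and γ ∈ [0,1), and let 0 < a < b < ∞. Then there exist constants 0 < c ≤ C < ∞ such that for all s, t ∈ [a,b] with s < t one has c · (t−s)^{2α+1} ≤ Φ(s,t) ≤ C · (t−s)^{2α+1}. -/

import Mathlib

open MeasureTheory

/-- The second-moment function
`Φ(s,t) = ∫₀^s ((t-u)^α - (s-u)^α)² u^{-γ} du + ∫_s^t (t-u)^{2α} u^{-γ} du`,
which equals `E[(Z(t)-Z(s))²]` for the generalized Riemann–Liouville FBM `Z`. -/
noncomputable def Phi (α γ s t : ℝ) : ℝ :=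
  (∫ u in Set.Ioo (0:ℝ) s, ((t-u) ^ α - (s-u) ^ α)^2 * u ^ (-γ)) +
    ∫ u in Set.Ioo s t, (t-u) ^ (2*α) * u ^ (-γ)

/-!
Since `u ^ (-γ)` is bounded above and below on `[a / 2, b]`, the second integral of `Φ` is
comparable to `∫_s^t (t-u)^{2α} du = (t-s)^{2α+1}/(2α+1)`; this already gives the lower bound.
For the upper bound, split the first integral at `s - ρ` with `ρ = κ (t - s)`, `κ = a / (2b)`.
On `(s - ρ, s)` the crude bound `(x^α - y^α)² ≤ 2 (x^{2α} + y^{2α})` integrates to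
`O((t-s)^{2α+1})`. On `(0, s - ρ)` the mean value theorem gives
`((t-u)^α - (s-u)^α)² ≤ α² (t-s)² (s-u)^{2α-2}`, and since `2α - 2 < -1` the weighted integral
of `(s-u)^{2α-2}` is `O(ρ^{2α-1})`, so this piece is `O((t-s)² ρ^{2α-1}) = O((t-s)^{2α+1})`.
-/

open Set Real

lemma rpow_sq_eq {x : ℝ} (hx : 0 ≤ x) (p : ℝ) : (x ^ p) ^ 2 = x ^ (2 * p) := by
  rw [mul_comm]
  exact_mod_cast (rpow_mul_natCast hx p 2).symm

lemma abs_rpow_sub_rpow_le {α x y : ℝ} (hα : α ≤ 1) (hy : 0 < y) (hyx : y ≤ x) :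
    |x ^ α - y ^ α| ≤ |α| * (x - y) * y ^ (α - 1) := by
  rcases hyx.eq_or_lt with rfl | hyx
  · simp
  obtain ⟨c, hc, hslope⟩ := exists_hasDerivAt_eq_slope (fun u => u ^ α)
    (fun u => α * u ^ (α - 1)) hyx
    (continuousOn_id.rpow_const fun u hu => Or.inl (hy.trans_le hu.1).ne')
    fun u hu => hasDerivAt_rpow_const (Or.inl (hy.trans hu.1).ne')
  have hxy : 0 < x - y := sub_pos.2 hyx
  rw [eq_div_iff hxy.ne'] at hslope
  rw [← hslope, abs_mul, abs_mul, abs_of_pos hxy,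
    abs_of_pos (rpow_pos_of_pos (hy.trans hc.1) _), mul_right_comm]
  exact mul_le_mul_of_nonneg_left (rpow_le_rpow_of_nonpos hy hc.1.le (by linarith))
    (by positivity)

lemma sq_rpow_sub_rpow_le {α x y : ℝ} (hα : α ≤ 1) (hy : 0 < y) (hyx : y ≤ x) :
    (x ^ α - y ^ α) ^ 2 ≤ α ^ 2 * (x - y) ^ 2 * y ^ (2 * α - 2) := by
  calc (x ^ α - y ^ α) ^ 2 = |x ^ α - y ^ α| ^ 2 := (sq_abs _).symm
    _ ≤ (|α| * (x - y) * y ^ (α - 1)) ^ 2 := by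
        gcongr
        exact abs_rpow_sub_rpow_le hα hy hyx
    _ = α ^ 2 * (x - y) ^ 2 * y ^ (2 * α - 2) := by
        rw [mul_pow, mul_pow, sq_abs, rpow_sq_eq hy.le]
        ring_nf

lemma sq_rpow_sub_rpow_le_two_mul_add {x y : ℝ} (hx : 0 ≤ x) (hy : 0 ≤ y) (α : ℝ) :
    (x ^ α - y ^ α) ^ 2 ≤ 2 * (x ^ (2 * α) + y ^ (2 * α)) := by
  rw [← rpow_sq_eq hx, ← rpow_sq_eq hy]
  nlinarith [sq_nonneg (x ^ α + y ^ α)]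

lemma intervalIntegrable_sub_rpow {p l r t : ℝ} (h : -1 < p ∨ 0 ∉ uIcc (t - l) (t - r)) :
    IntervalIntegrable (fun u => (t - u) ^ p) volume l r := by
  have := (if hp : -1 < p then intervalIntegral.intervalIntegrable_rpow' hp
    else intervalIntegral.intervalIntegrable_rpow (Or.inr (h.resolve_left hp))).comp_sub_left t
  simpa only [sub_sub_cancel] using this

lemma integrableOn_Ioo_sub_rpow {p l r t : ℝ} (hlr : l ≤ r) (h : -1 < p ∨ r < t) :
    IntegrableOn (fun u => (t - u) ^ p) (Ioo l r) := by
  refine (intervalIntegrable_iff_integrableOn_Ioo_of_le hlr).1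
    (intervalIntegrable_sub_rpow (h.imp_right fun hrt h0 => ?_))
  rw [uIcc_of_ge (by linarith)] at h0
  linarith [h0.1]

lemma integral_Ioo_sub_rpow {p l r t : ℝ} (hlr : l ≤ r) (h : -1 < p ∨ p ≠ -1 ∧ r < t) :
    ∫ u in Ioo l r, (t - u) ^ p = ((t - l) ^ (p + 1) - (t - r) ^ (p + 1)) / (p + 1) := by
  rw [← integral_Ioc_eq_integral_Ioo, ← intervalIntegral.integral_of_le hlr,
    intervalIntegral.integral_comp_sub_left (fun u => u ^ p) t, integral_rpow]
  refine h.imp_right fun ⟨hp, hrt⟩ => ⟨hp, fun h0 => ?_⟩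
  rw [uIcc_of_le (by linarith)] at h0
  linarith [h0.1]

lemma integral_Ioo_sub_rpow_self {p l r : ℝ} (hlr : l ≤ r) (hp : -1 < p) :
    ∫ u in Ioo l r, (r - u) ^ p = (r - l) ^ (p + 1) / (p + 1) := by
  rw [integral_Ioo_sub_rpow hlr (Or.inl hp), sub_self, zero_rpow (by linarith), sub_zero]

lemma integral_Ioo_zero_rpow {q x : ℝ} (hq : -1 < q) (hx : 0 ≤ x) :
    ∫ u in Ioo 0 x, u ^ q = x ^ (q + 1) / (q + 1) := by
  rw [← integral_Ioc_eq_integral_Ioo, ← intervalIntegral.integral_of_le hx,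
    integral_rpow (Or.inl hq), zero_rpow (by linarith), sub_zero]

lemma setIntegral_Ioo_le_add_of_nonneg {f : ℝ → ℝ} {l m r : ℝ} (hlm : l ≤ m) (hmr : m ≤ r)
    (hf : ∀ u ∈ Ioo l r, 0 ≤ f u) :
    ∫ u in Ioo l r, f u ≤ (∫ u in Ioo l m, f u) + ∫ u in Ioo m r, f u := by
  by_cases hi : IntegrableOn f (Ioo l r)
  · have hlm' : IntervalIntegrable f volume l m :=
      (intervalIntegrable_iff_integrableOn_Ioo_of_le hlm).2
        (hi.mono_set (Ioo_subset_Ioo_right hmr))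
    have hmr' : IntervalIntegrable f volume m r :=
      (intervalIntegrable_iff_integrableOn_Ioo_of_le hmr).2
        (hi.mono_set (Ioo_subset_Ioo_left hlm))
    simp only [← integral_Ioc_eq_integral_Ioo]
    rw [← intervalIntegral.integral_of_le hlm, ← intervalIntegral.integral_of_le hmr,
      ← intervalIntegral.integral_of_le (hlm.trans hmr),
      intervalIntegral.integral_add_adjacent_intervals hlm' hmr']
  · rw [integral_undef hi]
    exact add_nonneg
      (setIntegral_nonneg measurableSet_Ioo fun u hu => hf u ⟨hu.1, hu.2.trans_le hmr⟩)
      (setIntegral_nonneg measurableSet_Ioo fun u hu => hf u ⟨hlm.trans_lt hu.1, hu.2⟩)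

lemma integrableOn_Ioo_zero_sub_rpow_mul_rpow_neg {p γ s ρ : ℝ} (hp : p ≤ 0) (hγ : γ < 1)
    (hρ : 0 < ρ) (hρs : ρ < s) :
    IntegrableOn (fun u => (s - u) ^ p * u ^ (-γ)) (Ioo 0 (s - ρ)) := by
  refine Integrable.bdd_mul (c := ρ ^ p)
    ((intervalIntegral.integrableOn_Ioo_rpow_iff (by linarith)).2 (by linarith))
    (Measurable.aestronglyMeasurable (by fun_prop)) ((ae_restrict_iff' measurableSet_Ioo).2 ?_)
  filter_upwards with u hu
  rw [norm_of_nonneg (rpow_nonneg (by linarith [hu.2]) _)]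
  exact rpow_le_rpow_of_nonpos hρ (by linarith [hu.2]) hp

lemma integral_Ioo_zero_sub_rpow_mul_rpow_neg_le {p γ s ρ : ℝ} (hp : p < -1) (hγ0 : 0 ≤ γ)
    (hγ1 : γ < 1) (hρ : 0 < ρ) (hρs : ρ ≤ s / 2) :
    ∫ u in Ioo 0 (s - ρ), (s - u) ^ p * u ^ (-γ) ≤
      (s / 2) ^ (-γ) * ρ ^ (p + 1) * (1 / (1 - γ) + 1 / (-1 - p)) := by
  have hs2 : 0 < s / 2 := hρ.trans_le hρs
  have hnonneg : ∀ u ∈ Ioo 0 (s - ρ), 0 ≤ (s - u) ^ p * u ^ (-γ) := fun u hu =>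
    mul_nonneg (rpow_nonneg (by linarith [hu.2]) _) (rpow_nonneg hu.1.le _)
  have hinner : ∫ u in Ioo 0 (s / 2), (s - u) ^ p * u ^ (-γ) ≤
      ∫ u in Ioo 0 (s / 2), (s / 2) ^ p * u ^ (-γ) :=
    setIntegral_mono_of_nonneg (fun u hu => hnonneg u ⟨hu.1, by linarith [hu.2]⟩)
      (fun u hu => mul_le_mul_of_nonneg_right
        (rpow_le_rpow_of_nonpos hs2 (by linarith [hu.2]) (by linarith)) (rpow_nonneg hu.1.le _))
      (((intervalIntegral.integrableOn_Ioo_rpow_iff hs2).2 (by linarith)).const_mul _)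
  have houter : ∫ u in Ioo (s / 2) (s - ρ), (s - u) ^ p * u ^ (-γ) ≤
      ∫ u in Ioo (s / 2) (s - ρ), (s / 2) ^ (-γ) * (s - u) ^ p :=
    setIntegral_mono_of_nonneg (fun u hu => hnonneg u ⟨hs2.trans hu.1, hu.2⟩)
      (fun u hu => (mul_comm _ _).trans_le (mul_le_mul_of_nonneg_right
        (rpow_le_rpow_of_nonpos hs2 hu.1.le (by linarith)) (rpow_nonneg (by linarith [hu.2]) _)))
      ((integrableOn_Ioo_sub_rpow (by linarith : s / 2 ≤ s - ρ)
        (Or.inr (by linarith : s - ρ < s))).const_mul _)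
  have hρp : (s / 2) ^ (p + 1) ≤ ρ ^ (p + 1) := rpow_le_rpow_of_nonpos hρ hρs (by linarith)
  have hexp : (s / 2) ^ p * (s / 2) ^ (1 - γ) = (s / 2) ^ (-γ) * (s / 2) ^ (p + 1) := by
    rw [← rpow_add hs2, ← rpow_add hs2]; ring_nf
  have h1γ : 0 < 1 - γ := by linarith
  have hp1 : 0 < -1 - p := by linarith
  calc ∫ u in Ioo 0 (s - ρ), (s - u) ^ p * u ^ (-γ)
      ≤ (∫ u in Ioo 0 (s / 2), (s - u) ^ p * u ^ (-γ)) +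
          ∫ u in Ioo (s / 2) (s - ρ), (s - u) ^ p * u ^ (-γ) :=
        setIntegral_Ioo_le_add_of_nonneg hs2.le (by linarith) hnonneg
    _ ≤ (s / 2) ^ (-γ) * (s / 2) ^ (p + 1) / (1 - γ) +
          (s / 2) ^ (-γ) * ((ρ ^ (p + 1) - (s / 2) ^ (p + 1)) / (-1 - p)) := by
        refine add_le_add (hinner.trans_eq ?_) (houter.trans_eq ?_)
        · rw [integral_const_mul, integral_Ioo_zero_rpow (by linarith) hs2.le,
            show -γ + 1 = 1 - γ by ring, ← mul_div_assoc, hexp]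
        · rw [integral_const_mul, integral_Ioo_sub_rpow (by linarith)
            (Or.inr ⟨by linarith, by linarith⟩), sub_sub_cancel, show s - s / 2 = s / 2 by ring,
            show -1 - p = -(p + 1) by ring, div_neg, ← neg_div, neg_sub]
    _ ≤ (s / 2) ^ (-γ) * ρ ^ (p + 1) / (1 - γ) +
          (s / 2) ^ (-γ) * (ρ ^ (p + 1) / (-1 - p)) := by
        gcongr
        linarith [rpow_nonneg hs2.le (p + 1)]
    _ = (s / 2) ^ (-γ) * ρ ^ (p + 1) * (1 / (1 - γ) + 1 / (-1 - p)) := by ring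

lemma integral_Ioo_sub_rpow_mul_rpow_neg_le {p γ s t : ℝ} (hp : -1 < p) (hγ : 0 ≤ γ)
    (hs : 0 < s) (hst : s ≤ t) :
    ∫ u in Ioo s t, (t - u) ^ p * u ^ (-γ) ≤ s ^ (-γ) * ((t - s) ^ (p + 1) / (p + 1)) := by
  rw [← integral_Ioo_sub_rpow_self hst hp, ← integral_const_mul]
  refine setIntegral_mono_of_nonneg
    (fun u hu => mul_nonneg (rpow_nonneg (by linarith [hu.2]) _)
      (rpow_nonneg (hs.trans hu.1).le _))
    (fun u hu => ?_) ((integrableOn_Ioo_sub_rpow hst (Or.inl hp)).const_mul _)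
  rw [mul_comm (s ^ _)]
  exact mul_le_mul_of_nonneg_left (rpow_le_rpow_of_nonpos hs hu.1.le (neg_nonpos.2 hγ))
    (rpow_nonneg (by linarith [hu.2]) _)

lemma le_integral_Ioo_sub_rpow_mul_rpow_neg {p γ s t : ℝ} (hp : -1 < p) (hγ : 0 ≤ γ)
    (hs : 0 < s) (hst : s ≤ t) :
    t ^ (-γ) * ((t - s) ^ (p + 1) / (p + 1)) ≤ ∫ u in Ioo s t, (t - u) ^ p * u ^ (-γ) := by
  have hint : IntegrableOn (fun u => (t - u) ^ p * u ^ (-γ)) (Ioo s t) := by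
    refine (integrableOn_Ioo_sub_rpow hst (Or.inl hp)).mul_bdd (c := s ^ (-γ))
      (Measurable.aestronglyMeasurable (by fun_prop))
      ((ae_restrict_iff' measurableSet_Ioo).2 (.of_forall fun u hu => ?_))
    rw [norm_of_nonneg (rpow_nonneg (hs.trans hu.1).le _)]
    exact rpow_le_rpow_of_nonpos hs hu.1.le (neg_nonpos.2 hγ)
  rw [← integral_Ioo_sub_rpow_self hst hp, ← integral_const_mul]
  refine setIntegral_mono_on ((integrableOn_Ioo_sub_rpow hst (Or.inl hp)).const_mul _) hint
    measurableSet_Ioo fun u hu => ?_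
  rw [mul_comm (t ^ _)]
  exact mul_le_mul_of_nonneg_left (rpow_le_rpow_of_nonpos (hs.trans hu.1) hu.2.le
    (neg_nonpos.2 hγ)) (rpow_nonneg (by linarith [hu.2]) _)

lemma setIntegral_increment_sq_far_le {α γ s t ρ : ℝ} (hα : α < 1 / 2) (hγ0 : 0 ≤ γ)
    (hγ1 : γ < 1) (hρ : 0 < ρ) (hρs : ρ ≤ s / 2) (hst : s ≤ t) :
    ∫ u in Ioo 0 (s - ρ), ((t - u) ^ α - (s - u) ^ α) ^ 2 * u ^ (-γ) ≤
      α ^ 2 * (t - s) ^ 2 *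
        ((s / 2) ^ (-γ) * ρ ^ (2 * α - 1) * (1 / (1 - γ) + 1 / (1 - 2 * α))) := by
  have hkernel := integral_Ioo_zero_sub_rpow_mul_rpow_neg_le (p := 2 * α - 2) (by linarith)
    hγ0 hγ1 hρ hρs
  rw [show 2 * α - 2 + 1 = 2 * α - 1 by ring, show -1 - (2 * α - 2) = 1 - 2 * α by ring]
    at hkernel
  have hmvt : ∀ u ∈ Ioo 0 (s - ρ), ((t - u) ^ α - (s - u) ^ α) ^ 2 * u ^ (-γ) ≤
      α ^ 2 * (t - s) ^ 2 * ((s - u) ^ (2 * α - 2) * u ^ (-γ)) := fun u hu => by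
    have h := sq_rpow_sub_rpow_le (x := t - u) (y := s - u) (α := α) (by linarith)
      (by linarith [hu.2]) (by linarith)
    rw [sub_sub_sub_cancel_right] at h
    rw [← mul_assoc]
    exact mul_le_mul_of_nonneg_right h (rpow_nonneg hu.1.le _)
  refine (setIntegral_mono_of_nonneg
    (fun u hu => mul_nonneg (sq_nonneg _) (rpow_nonneg hu.1.le _)) hmvt
    ((integrableOn_Ioo_zero_sub_rpow_mul_rpow_neg (by linarith) hγ1 hρ (by linarith)).const_mul
      _)).trans ?_
  rw [integral_const_mul]
  exact mul_le_mul_of_nonneg_left hkernel (by positivity)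

lemma setIntegral_increment_sq_near_le {α γ s t w : ℝ} (hα : -(1 / 2) < α) (hγ : 0 ≤ γ)
    (hw : 0 < w) (hws : w ≤ s) (hst : s ≤ t) :
    ∫ u in Ioo w s, ((t - u) ^ α - (s - u) ^ α) ^ 2 * u ^ (-γ) ≤
      2 * w ^ (-γ) * (((t - w) ^ (2 * α + 1) + (s - w) ^ (2 * α + 1)) / (2 * α + 1)) := by
  have hq : -1 < 2 * α := by linarith
  have ht := integrableOn_Ioo_sub_rpow (t := t) hws (Or.inl hq)
  have hs := integrableOn_Ioo_sub_rpow (t := s) hws (Or.inl hq)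
  have hbound : ∀ u ∈ Ioo w s, ((t - u) ^ α - (s - u) ^ α) ^ 2 * u ^ (-γ) ≤
      2 * w ^ (-γ) * ((t - u) ^ (2 * α) + (s - u) ^ (2 * α)) := fun u hu => by
    rw [mul_right_comm]
    exact mul_le_mul
      (sq_rpow_sub_rpow_le_two_mul_add (by linarith [hu.2]) (by linarith [hu.2]) α)
      (rpow_le_rpow_of_nonpos hw hu.1.le (neg_nonpos.2 hγ)) (rpow_nonneg (hw.trans hu.1).le _)
      (mul_nonneg zero_le_two (add_nonneg (rpow_nonneg (by linarith [hu.2]) _)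
        (rpow_nonneg (by linarith [hu.2]) _)))
  refine (setIntegral_mono_of_nonneg
    (fun u hu => mul_nonneg (sq_nonneg _) (rpow_nonneg (hw.trans hu.1).le _)) hbound
    ((ht.add hs).const_mul _)).trans ?_
  rw [integral_const_mul, integral_add ht hs, integral_Ioo_sub_rpow hws (Or.inl hq),
    integral_Ioo_sub_rpow_self hws hq, ← add_div]
  have hq1 : 0 < 2 * α + 1 := by linarith
  gcongr 2 * w ^ (-γ) * (?_ / _)
  linarith [rpow_nonneg (sub_nonneg.2 hst) (2 * α + 1)]

lemma le_Phi {α γ s t : ℝ} (hα : -(1 / 2) < α) (hγ : 0 ≤ γ) (hs : 0 < s) (hst : s < t) :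
    t ^ (-γ) * ((t - s) ^ (2 * α + 1) / (2 * α + 1)) ≤ Phi α γ s t := by
  have hfirst : 0 ≤ ∫ u in Ioo 0 s, ((t - u) ^ α - (s - u) ^ α) ^ 2 * u ^ (-γ) :=
    setIntegral_nonneg measurableSet_Ioo fun u hu =>
      mul_nonneg (sq_nonneg _) (rpow_nonneg hu.1.le _)
  exact (le_integral_Ioo_sub_rpow_mul_rpow_neg (by linarith) hγ hs hst.le).trans
    (le_add_of_nonneg_left hfirst)

lemma Phi_le {α γ s t κ : ℝ} (hα1 : -(1 / 2) < α) (hα2 : α < 1 / 2) (hγ0 : 0 ≤ γ)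
    (hγ1 : γ < 1) (hs : 0 < s) (hst : s < t) (hκ : 0 < κ) (hκs : κ * (t - s) ≤ s / 2) :
    Phi α γ s t ≤ (s / 2) ^ (-γ) * (α ^ 2 * κ ^ (2 * α - 1) * (1 / (1 - γ) + 1 / (1 - 2 * α)) +
      (2 * ((1 + κ) ^ (2 * α + 1) + κ ^ (2 * α + 1)) + 1) / (2 * α + 1)) *
      (t - s) ^ (2 * α + 1) := by
  have hδ : 0 < t - s := sub_pos.2 hst
  have hρ : 0 < κ * (t - s) := mul_pos hκ hδ
  have hq : 0 < 2 * α + 1 := by linarith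
  have hsplit := setIntegral_Ioo_le_add_of_nonneg
    (f := fun u => ((t - u) ^ α - (s - u) ^ α) ^ 2 * u ^ (-γ))
    (by linarith : 0 ≤ s - κ * (t - s)) (by linarith : s - κ * (t - s) ≤ s)
    fun u hu => mul_nonneg (sq_nonneg _) (rpow_nonneg hu.1.le _)
  have hfar := setIntegral_increment_sq_far_le hα2 hγ0 hγ1 hρ hκs hst.le
  have hfar_pow : (t - s) ^ 2 * (κ * (t - s)) ^ (2 * α - 1) =
      κ ^ (2 * α - 1) * (t - s) ^ (2 * α + 1) := by
    rw [mul_rpow hκ.le hδ.le, mul_left_comm, ← rpow_two, ← rpow_add hδ]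
    ring_nf
  have hnear_pow :
      (t - (s - κ * (t - s))) ^ (2 * α + 1) + (s - (s - κ * (t - s))) ^ (2 * α + 1) =
        ((1 + κ) ^ (2 * α + 1) + κ ^ (2 * α + 1)) * (t - s) ^ (2 * α + 1) := by
    rw [show t - (s - κ * (t - s)) = (1 + κ) * (t - s) by ring, sub_sub_cancel,
      mul_rpow (by linarith) hδ.le, mul_rpow hκ.le hδ.le]
    ring
  have hpow := rpow_nonneg hδ.le (2 * α + 1)
  have hκpow : 0 ≤ (1 + κ) ^ (2 * α + 1) + κ ^ (2 * α + 1) := by positivity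
  have hnear : ∫ u in Ioo (s - κ * (t - s)) s, ((t - u) ^ α - (s - u) ^ α) ^ 2 * u ^ (-γ) ≤
      2 * (s / 2) ^ (-γ) * (((1 + κ) ^ (2 * α + 1) + κ ^ (2 * α + 1)) *
        (t - s) ^ (2 * α + 1) / (2 * α + 1)) := by
    refine (setIntegral_increment_sq_near_le hα1 hγ0 (by linarith) (by linarith) hst.le).trans ?_
    rw [hnear_pow]
    gcongr 2 * ?_ * _
    exact rpow_le_rpow_of_nonpos (by linarith) (by linarith) (neg_nonpos.2 hγ0)
  have hsecond : ∫ u in Ioo s t, (t - u) ^ (2 * α) * u ^ (-γ) ≤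
      (s / 2) ^ (-γ) * ((t - s) ^ (2 * α + 1) / (2 * α + 1)) := by
    refine (integral_Ioo_sub_rpow_mul_rpow_neg_le (by linarith) hγ0 hs hst.le).trans ?_
    gcongr ?_ * _
    exact rpow_le_rpow_of_nonpos (by linarith) (by linarith) (neg_nonpos.2 hγ0)
  calc Phi α γ s t
      ≤ α ^ 2 * (t - s) ^ 2 * ((s / 2) ^ (-γ) * (κ * (t - s)) ^ (2 * α - 1) *
            (1 / (1 - γ) + 1 / (1 - 2 * α))) +
          2 * (s / 2) ^ (-γ) * (((1 + κ) ^ (2 * α + 1) + κ ^ (2 * α + 1)) *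
            (t - s) ^ (2 * α + 1) / (2 * α + 1)) +
          (s / 2) ^ (-γ) * ((t - s) ^ (2 * α + 1) / (2 * α + 1)) :=
        add_le_add (hsplit.trans (add_le_add hfar hnear)) hsecond
    _ = _ := by
        linear_combination
          (α ^ 2 * (s / 2) ^ (-γ) * (1 / (1 - γ) + 1 / (1 - 2 * α))) * hfar_pow

lemma le_Phi_of_mem_Icc {α γ a b s t : ℝ} (hα : -(1 / 2) < α) (hγ : 0 ≤ γ) (ha : 0 < a)
    (hs : a ≤ s) (hst : s < t) (ht : t ≤ b) :
    b ^ (-γ) / (2 * α + 1) * (t - s) ^ (2 * α + 1) ≤ Phi α γ s t := by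
  have hpow := rpow_nonneg (sub_nonneg.2 hst.le) (2 * α + 1)
  have hq : 0 < 2 * α + 1 := by linarith
  calc b ^ (-γ) / (2 * α + 1) * (t - s) ^ (2 * α + 1)
      = b ^ (-γ) * ((t - s) ^ (2 * α + 1) / (2 * α + 1)) := by ring
    _ ≤ t ^ (-γ) * ((t - s) ^ (2 * α + 1) / (2 * α + 1)) :=
        mul_le_mul_of_nonneg_right (rpow_le_rpow_of_nonpos (by linarith) ht
          (neg_nonpos.2 hγ)) (by positivity)
    _ ≤ Phi α γ s t := le_Phi hα hγ (ha.trans_le hs) hst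

lemma exists_Phi_le_of_mem_Icc {α γ a b : ℝ} (hα1 : -(1 / 2) < α) (hα2 : α < 1 / 2)
    (hγ0 : 0 ≤ γ) (hγ1 : γ < 1) (ha : 0 < a) (hab : a < b) :
    ∃ C, ∀ s t : ℝ, a ≤ s → s < t → t ≤ b → Phi α γ s t ≤ C * (t - s) ^ (2 * α + 1) := by
  have hb : 0 < b := ha.trans hab
  set κ := a / (2 * b) with hκ_def
  have hκ : 0 < κ := by positivity
  set M := α ^ 2 * κ ^ (2 * α - 1) * (1 / (1 - γ) + 1 / (1 - 2 * α)) +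
    (2 * ((1 + κ) ^ (2 * α + 1) + κ ^ (2 * α + 1)) + 1) / (2 * α + 1)
  have hM : 0 ≤ M := by
    have : 0 < 1 - γ := by linarith
    have : 0 < 1 - 2 * α := by linarith
    have : 0 < 2 * α + 1 := by linarith
    positivity
  refine ⟨(a / 2) ^ (-γ) * M, fun s t hs hst ht => ?_⟩
  have hκs : κ * (t - s) ≤ s / 2 := by
    calc κ * (t - s) ≤ κ * b := by gcongr; linarith
      _ = a / 2 := by rw [hκ_def]; field_simp
      _ ≤ s / 2 := by linarith
  exact (Phi_le hα1 hα2 hγ0 hγ1 (ha.trans_le hs) hst hκ hκs).trans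
    (mul_le_mul_of_nonneg_right (mul_le_mul_of_nonneg_right (rpow_le_rpow_of_nonpos
      (by positivity) (by linarith) (neg_nonpos.2 hγ0)) hM)
      (rpow_nonneg (sub_nonneg.2 hst.le) _))

/-- For `α ∈ (-1/2,1/2)`: `Φ(s,t) ≍ (t-s)^{2α+1}` uniformly on `[a,b]`. -/
theorem Z_increment_bound_interval (α γ : ℝ)
    (hα1 : -(1/2) < α) (hα2 : α < 1/2) (hγ0 : 0 ≤ γ) (hγ1 : γ < 1)
    (a b : ℝ) (ha : 0 < a) (hab : a < b) :
    ∃ c C : ℝ, 0 < c ∧ c ≤ C ∧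
      ∀ s t : ℝ, a ≤ s → s < t → t ≤ b →
        c * (t-s) ^ (2*α+1) ≤ Phi α γ s t ∧
        Phi α γ s t ≤ C * (t-s) ^ (2*α+1) := by
  obtain ⟨C, hC⟩ := exists_Phi_le_of_mem_Icc hα1 hα2 hγ0 hγ1 ha hab
  have hc : 0 < b ^ (-γ) / (2 * α + 1) :=
    div_pos (rpow_pos_of_pos (ha.trans hab) _) (by linarith)
  refine ⟨_, max _ C, hc, le_max_left _ _, fun s t hs hst ht =>
    ⟨le_Phi_of_mem_Icc hα1 hγ0 ha hs hst ht, (hC s t hs hst ht).trans ?_⟩⟩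
  exact mul_le_mul_of_nonneg_right (le_max_right _ _) (rpow_nonneg (sub_nonneg.2 hst.le) _)
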